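/- Let $X \in \mathbb{C}^{m\times n}$, let $P \in \mathbb{C}^{m\times m}$ and $Q \in \mathbb{C}^{n\times n}$ be orthogonal projections, i.e. $P^* = P$, $P^2 = P$, $Q^* = Q$, $Q^2 = Q$. Then $\|X - P X Q\|_F^2 \le \|X - P X\|_F^2 + \|X - X Q\|_F^2$. -/

import Mathlib

open scoped BigOperators
open Matrix

/-- Squared Frobenius norm of a complex matrix. -/
noncomputable def frobSq {m n : Type*} [Fintype m] [Fintype n] (M : Matrix m n ℂ) : ℝ :=
  ∑ i, ∑ j, ‖M i j‖ ^ 2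

/-
The identity `X - P X Q = P (X - X Q) + (1 - P) X` splits the left-hand side into two
Frobenius-orthogonal pieces, since `P (1 - P) = 0`. Pythagoras then gives
`‖X - P X Q‖² = ‖P (X - X Q)‖² + ‖X - P X‖²`, and the orthogonal projection `P` does not
increase the Frobenius norm.
-/

namespace Matrix

variable {m n : Type*} [Fintype m] [Fintype n]

lemma frobSq_nonneg (M : Matrix m n ℂ) : 0 ≤ frobSq M := by
  unfold frobSq
  positivity

lemma ofReal_frobSq (M : Matrix m n ℂ) : (frobSq M : ℂ) = (Mᴴ * M).trace := by
  simp only [frobSq, trace, diag, mul_apply, conjTranspose_apply, RCLike.star_def,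
    RCLike.conj_mul, Complex.ofReal_sum, Complex.ofReal_pow]
  exact Finset.sum_comm

lemma frobSq_add_of_conjTranspose_mul_eq_zero {A B : Matrix m n ℂ} (h : Aᴴ * B = 0) :
    frobSq (A + B) = frobSq A + frobSq B := by
  have h' : Bᴴ * A = 0 := by rw [← conjTranspose_conjTranspose A, ← conjTranspose_mul, h,
    conjTranspose_zero]
  apply Complex.ofReal_injective
  rw [Complex.ofReal_add, ofReal_frobSq, ofReal_frobSq, ofReal_frobSq, conjTranspose_add,
    Matrix.add_mul, Matrix.mul_add, Matrix.mul_add, h, h', add_zero, zero_add, trace_add]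

variable [DecidableEq m] {P : Matrix m m ℂ}

lemma frobSq_mul_add_one_sub_mul (hP : IsStarProjection P) (A B : Matrix m n ℂ) :
    frobSq (P * A + (1 - P) * B) = frobSq (P * A) + frobSq ((1 - P) * B) := by
  apply frobSq_add_of_conjTranspose_mul_eq_zero
  rw [conjTranspose_mul, ← star_eq_conjTranspose P, hP.isSelfAdjoint.star_eq, Matrix.mul_assoc,
    ← Matrix.mul_assoc P, hP.mul_one_sub_self, Matrix.zero_mul, Matrix.mul_zero]

lemma frobSq_mul_le (hP : IsStarProjection P) (C : Matrix m n ℂ) :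
    frobSq (P * C) ≤ frobSq C := by
  have hpyth := frobSq_mul_add_one_sub_mul hP C C
  rw [← Matrix.add_mul, add_sub_cancel, Matrix.one_mul] at hpyth
  linarith [frobSq_nonneg ((1 - P) * C)]

end Matrix

theorem hybrid_projection_lemma_matrix_case_general {m n : ℕ}
    (X : Matrix (Fin m) (Fin n) ℂ)
    (P : Matrix (Fin m) (Fin m) ℂ) (Q : Matrix (Fin n) (Fin n) ℂ)
    (hPstar : Pᴴ = P) (hPidem : P * P = P) :
    frobSq (X - P * X * Q) ≤ frobSq (X - P * X) + frobSq (X - X * Q) := by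
  have hP : IsStarProjection P := ⟨hPidem, hPstar⟩
  have hsplit : X - P * X * Q = P * (X - X * Q) + (1 - P) * X := by
    rw [Matrix.mul_sub, Matrix.sub_mul, Matrix.one_mul, Matrix.mul_assoc]
    abel
  rw [hsplit, frobSq_mul_add_one_sub_mul hP, Matrix.sub_mul, Matrix.one_mul]
  linarith [frobSq_mul_le hP (X - X * Q)]

/-- For `X ∈ ℂ^{m×n}` and orthogonal projections `P ∈ ℂ^{m×m}`, `Q ∈ ℂ^{n×n}`,
`‖X - P X Q‖_F² ≤ ‖X - P X‖_F² + ‖X - X Q‖_F²`. -/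
theorem hybrid_projection_lemma_matrix_case {m n : ℕ}
    (X : Matrix (Fin m) (Fin n) ℂ)
    (P : Matrix (Fin m) (Fin m) ℂ) (Q : Matrix (Fin n) (Fin n) ℂ)
    (hPstar : Pᴴ = P) (hPidem : P * P = P)
    (hQstar : Qᴴ = Q) (hQidem : Q * Q = Q) :
    frobSq (X - P * X * Q) ≤ frobSq (X - P * X) + frobSq (X - X * Q) :=
  hybrid_projection_lemma_matrix_case_general X P Q hPstar hPidem
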